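/- If $z \in \mathbb{C}^4$ satisfies $|z_i| = r$ for all $i = 1,2,3,4$ and has phase difference $\phi$, then $\|z\|_{\mathsf{X}} = 2\sqrt{2}\, r \sqrt{1 + |\cos(\phi/2)|}$. -/

import Mathlib

open Complex Real

noncomputable def Xfun (z : Fin 4 → ℂ) (σ : ℝ) : ℝ :=
  ‖z 0 * Complex.exp (σ * Complex.I) + (starRingEnd ℂ) (z 3)‖ +
  ‖z 1 * Complex.exp (σ * Complex.I) + (starRingEnd ℂ) (z 2)‖

noncomputable def Xnorm (z : Fin 4 → ℂ) : ℝ := ⨆ σ : ℝ, Xfun z σ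

noncomputable def phase (z : Fin 4 → ℂ) : ℝ :=
  (Complex.arg (z 0) + Complex.arg (z 3)) - (Complex.arg (z 1) + Complex.arg (z 2))

/-!
Up to a unimodular factor, each summand of `Xfun` is `r e^{iα} + r`, of modulus `2r |cos (α/2)|`,
where `α = σ + θ₁ + θ₄` resp.
`σ + θ₂ + θ₃`, so up to the factor `2r` one maximises `|cos x| + |cos (x - φ/2)|` over `x`.
Writing `a = cos (u - v)`, `b = cos (u + v)`, one has
`(|cos u| + |cos v|)² = 1 + ab + |a + b|`, which is `(1 + a)(1 + b)` or `(1 - a)(1 - b)`,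
hence at most `2 (1 + |a|)`, with equality when `b = ±1` has the sign of `a`.
-/

theorem Complex.norm_exp_ofReal_mul_I_add_one (t : ℝ) :
    ‖exp (t * I) + 1‖ = 2 * |Real.cos (t / 2)| := by
  have h : exp (t * I) + 1 = exp (↑(t / 2) * I) * ↑(2 * Real.cos (t / 2)) := by
    have ht : (t : ℂ) * I = ↑(t / 2) * I + ↑(t / 2) * I := by push_cast; ring
    rw [ht, exp_add, exp_mul_I]
    push_cast
    linear_combination Complex.sin ((t : ℂ) / 2) ^ 2 * I_sq - sin_sq_add_cos_sq ((t : ℂ) / 2)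
  rw [h, norm_mul, norm_exp_ofReal_mul_I, one_mul, norm_real, Real.norm_eq_abs, abs_mul,
    abs_two]

theorem Complex.norm_mul_exp_add_conj (r a b σ : ℝ) (hr : 0 ≤ r) :
    ‖(r : ℂ) * exp (a * I) * exp (σ * I) + starRingEnd ℂ ((r : ℂ) * exp (b * I))‖ =
      2 * r * |Real.cos ((σ + a + b) / 2)| := by
  have hconj : starRingEnd ℂ ((r : ℂ) * exp (b * I)) = r * exp (↑(-b) * I) := by
    rw [map_mul, conj_ofReal, ← exp_conj, map_mul, conj_ofReal, conj_I]
    push_cast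
    ring_nf
  have hfactor : (r : ℂ) * exp (a * I) * exp (σ * I) + r * exp (↑(-b) * I) =
      exp (↑(-b) * I) * (r * (exp (↑(σ + a + b) * I) + 1)) := by
    rw [mul_add, mul_add, ← mul_assoc, mul_comm (exp _) (r : ℂ), mul_assoc (r : ℂ),
      ← exp_add, mul_assoc, ← exp_add]
    push_cast
    ring_nf
  rw [hconj, hfactor, norm_mul, norm_exp_ofReal_mul_I, one_mul, norm_mul, norm_real,
    Real.norm_eq_abs, abs_of_nonneg hr, norm_exp_ofReal_mul_I_add_one]
  ring

theorem Real.sq_abs_cos_add_abs_cos (u v : ℝ) :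
    (|cos u| + |cos v|) ^ 2 = 1 + cos (u - v) * cos (u + v) + |cos (u - v) + cos (u + v)| := by
  have hsum : cos (u - v) + cos (u + v) = 2 * (cos u * cos v) := by
    rw [cos_add, cos_sub]; ring
  have hprod : cos (u - v) * cos (u + v) = cos u ^ 2 + cos v ^ 2 - 1 := by
    rw [cos_add, cos_sub]
    nlinarith [sin_sq_add_cos_sq u, sin_sq_add_cos_sq v]
  rw [hsum, hprod, abs_mul, abs_mul, abs_two, add_sq, sq_abs, sq_abs]
  ring

theorem one_add_mul_add_abs_add_le {a b : ℝ} (ha : |a| ≤ 1) (hb : |b| ≤ 1) :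
    1 + a * b + |a + b| ≤ 2 * (1 + |a|) := by
  rw [abs_le] at ha hb
  rcases le_total 0 (a + b) with hab | hab
  · rw [abs_of_nonneg hab]
    nlinarith [le_abs_self a]
  · rw [abs_of_nonpos hab]
    nlinarith [neg_abs_le a]

theorem Real.isGreatest_range_abs_cos_add_abs_cos_sub (c : ℝ) :
    IsGreatest (Set.range fun x => |cos x| + |cos (x - c)|) (√(2 * (1 + |cos c|))) := by
  have hsq (x : ℝ) : (|cos x| + |cos (x - c)|) ^ 2 =
      1 + cos c * cos (2 * x - c) + |cos c + cos (2 * x - c)| := by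
    rw [sq_abs_cos_add_abs_cos, sub_sub_cancel, ← add_sub_assoc, ← two_mul]
  refine ⟨?_, ?_⟩
  · obtain ⟨x, hx⟩ : ∃ x, cos (2 * x - c) = if 0 ≤ cos c then 1 else -1 := by
      split_ifs
      · exact ⟨c / 2, by rw [mul_div_cancel₀ c two_ne_zero, sub_self, cos_zero]⟩
      · exact ⟨(c + π) / 2, by rw [mul_div_cancel₀ _ two_ne_zero, add_sub_cancel_left, cos_pi]⟩
    refine ⟨x, ?_⟩
    dsimp only
    rw [← sqrt_sq (add_nonneg (abs_nonneg _) (abs_nonneg _)), hsq, hx]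
    congr 1
    split_ifs with hc
    · rw [abs_of_nonneg hc, abs_of_nonneg (by linarith)]; ring
    · rw [abs_of_neg (not_le.mp hc), abs_of_nonpos (by linarith)]; ring
  · rintro _ ⟨x, rfl⟩
    rw [le_sqrt (by positivity) (by positivity), hsq]
    exact one_add_mul_add_abs_add_le (abs_cos_le_one c) (abs_cos_le_one _)

theorem stmt_10 (z : Fin 4 → ℂ) (r : ℝ) (hr : 0 ≤ r) (θ : Fin 4 → ℝ)
    (hz : ∀ i, z i = (r : ℂ) * Complex.exp (θ i * Complex.I)) (φ : ℝ)
    (hφ : φ = (θ 0 + θ 3) - (θ 1 + θ 2)) :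
    Xnorm z = 2 * Real.sqrt 2 * r * Real.sqrt (1 + |Real.cos (φ / 2)|) := by
  set g : ℝ → ℝ := fun x => |Real.cos x| + |Real.cos (x - φ / 2)|
  have hX : Xfun z = (2 * r * ·) ∘ g ∘ fun σ => (σ + θ 0 + θ 3) / 2 := by
    funext σ
    simp only [Xfun, hz, norm_mul_exp_add_conj _ _ _ _ hr, Function.comp, g, hφ]
    ring_nf
  have hsurj : Function.Surjective fun σ : ℝ => (σ + θ 0 + θ 3) / 2 :=
    fun x => ⟨2 * x - θ 0 - θ 3, by ring⟩
  have hmax := (monotone_mul_left_of_nonneg (by positivity : 0 ≤ 2 * r)).map_isGreatest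
    (isGreatest_range_abs_cos_add_abs_cos_sub (φ / 2))
  rw [← Set.range_comp, ← hsurj.range_comp, Function.comp_assoc, ← hX] at hmax
  rw [Xnorm, iSup, hmax.csSup_eq, sqrt_mul zero_le_two]
  ring
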